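/- arXiv:1210.5551 — 4 statements merged into one kernel-verified Lean document; each statement's English description precedes it below -/
import Mathlib

section
/- Let n ≥ 2 be an integer, ε > 0, and 0 < ψ₀ ≤ ψ₁ be real numbers. Then there exist constants θ > 0 and N ≥ n, depending only on n, ε, ψ₀ and ψ₁, with the following property: for every ψ ∈ [ψ₀, ψ₁], all positive real numbers λ₁, …, λₙ satisfying Σᵢ 1/λᵢ = n/ψ, and all real numbers b₁, …, bₙ satisfying ε ≤ bᵢ ≤ 1/ε for every i and Σᵢ 1/bᵢ ≤ n/ψ, if Σᵢ λᵢ ≥ N then Σᵢ bᵢ/λᵢ² ≥ (n + θ)/ψ. -/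
private lemma key_arith (n θ ε ψ p δ : ℝ) (hn : (2:ℝ) ≤ n) (hψ : 0 < ψ)
    (hp : p * ψ = n) (hθ : 0 < θ) (hθψ : 4 * θ ≤ ε * ψ) (hδ0 : 0 ≤ δ)
    (hδ : 4 * δ ≤ ε) (hpε : n * ε ≤ p) (hε : 0 < ε) :
    (n + θ) * (p - ε) ≤ (p - δ) ^ 2 * ψ := by
  have hp0 : 0 ≤ p := le_trans (by nlinarith) hpε
  have h1 : δ * (p * ψ) = δ * n := by rw [hp]
  have h2 : p * (p * ψ) = p * n := by rw [hp]
  have h3 : 4 * θ * p ≤ ε * (p * ψ) := by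
    calc 4 * θ * p ≤ ε * ψ * p := mul_le_mul_of_nonneg_right hθψ hp0
    _ = ε * (p * ψ) := by ring
  rw [hp] at h3
  have h4 : 4 * δ * n ≤ ε * n := mul_le_mul_of_nonneg_right hδ (by linarith)
  nlinarith [mul_nonneg (mul_nonneg hδ0 hδ0) hψ.le, mul_nonneg hθ.le hε.le]

/-- Pointwise eigenvalue form of the key lemma (Lemma 2.1): there exist `θ > 0` and
`N ≥ n` depending only on `n, ε, ψ₀, ψ₁` such that for every `ψ ∈ [ψ₀, ψ₁]`,
positive `λᵢ` with `Σ 1/λᵢ = n/ψ`, and `bᵢ` with `ε ≤ bᵢ ≤ 1/ε` and `Σ 1/bᵢ ≤ n/ψ`,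
if `Σ λᵢ ≥ N` then `Σ bᵢ/λᵢ² ≥ (n+θ)/ψ`. -/
theorem key_lemma_eigenvalue_form
    (n : ℕ) (hn : 2 ≤ n) (ε ψ₀ ψ₁ : ℝ) (hε : 0 < ε) (hψ₀ : 0 < ψ₀) (hψ₀₁ : ψ₀ ≤ ψ₁) :
    ∃ θ N : ℝ, 0 < θ ∧ (n : ℝ) ≤ N ∧
      ∀ ψ : ℝ, ψ₀ ≤ ψ → ψ ≤ ψ₁ →
        ∀ lam b : Fin n → ℝ,
          (∀ i, 0 < lam i) →
          (∑ i, 1 / lam i) = n / ψ →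
          (∀ i, ε ≤ b i ∧ b i ≤ 1 / ε) →
          (∑ i, 1 / b i) ≤ n / ψ →
          N ≤ ∑ i, lam i →
          (n + θ) / ψ ≤ ∑ i, b i / (lam i) ^ 2 := by
  have hn0 : (0:ℝ) < n := by positivity
  have hn2 : (2:ℝ) ≤ (n:ℝ) := by exact_mod_cast hn
  refine ⟨ε * ψ₀ / 4, 4 * n / ε + n, by positivity, le_add_of_nonneg_left (by positivity), ?_⟩
  intro ψ hψl hψu lam b hlam hsum hb hbsum hN
  have hψ : 0 < ψ := lt_of_lt_of_le hψ₀ hψl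
  set p : ℝ := n / ψ with hpdef
  have hpψ : p * ψ = n := div_mul_cancel₀ _ hψ.ne'
  -- each 1/b i ≥ ε and ≤ 1/ε etc.
  have hbpos : ∀ i, 0 < b i := fun i => lt_of_lt_of_le hε (hb i).1
  have hbinv : ∀ i, ε ≤ 1 / b i := by
    intro i
    rw [le_one_div (by positivity) (hbpos i)]
    exact (hb i).2
  -- n ε ≤ p
  have hnep : (n:ℝ) * ε ≤ p := by
    calc (n:ℝ) * ε = ∑ _i : Fin n, ε := by simp [mul_comm]
    _ ≤ ∑ i, 1 / b i := Finset.sum_le_sum fun i _ => hbinv i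
    _ ≤ p := hbsum
  -- find a big eigenvalue
  obtain ⟨i₀, -, hi₀⟩ : ∃ i ∈ Finset.univ, (4 * n / ε + n) / n ≤ lam i := by
    apply Finset.exists_le_of_sum_le ⟨⟨0, by omega⟩, Finset.mem_univ _⟩
    calc ∑ _i : Fin n, (4 * (n:ℝ) / ε + n) / n = n * ((4 * n / ε + n) / n) := by
          simp [mul_comm]
    _ = 4 * n / ε + n := by field_simp
    _ ≤ ∑ i, lam i := hN
  have hli₀ : 4 / ε ≤ lam i₀ := by
    have heq : (4 * (n:ℝ) / ε + n) / n = 4 / ε + 1 := by field_simp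
    rw [heq] at hi₀
    linarith
  set δ : ℝ := 1 / lam i₀ with hδdef
  have hδ0 : 0 < δ := one_div_pos.mpr (hlam i₀)
  have hδε : 4 * δ ≤ ε := by
    have h4ε : (0:ℝ) < 4 / ε := by positivity
    have h1 : 1 / lam i₀ ≤ 1 / (4 / ε) := one_div_le_one_div_of_le h4ε hli₀
    have h2 : (1:ℝ) / (4 / ε) = ε / 4 := by field_simp
    rw [h2] at h1
    rw [hδdef]
    linarith
  set T := Finset.univ.erase i₀ with hT
  have hmem : i₀ ∈ Finset.univ := Finset.mem_univ (α := Fin n) i₀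
  -- sum over T of 1/lam = p - δ
  have hA : ∑ i ∈ T, 1 / lam i = p - δ := by
    have := Finset.add_sum_erase Finset.univ (fun i => 1 / lam i) hmem
    rw [hsum] at this
    rw [hT]
    linarith [this]
  -- sum over T of 1/b ≤ p - ε, and positive
  have hB : ∑ i ∈ T, 1 / b i ≤ p - ε := by
    have := Finset.add_sum_erase Finset.univ (fun i => 1 / b i) hmem
    have h' : 1 / b i₀ + ∑ i ∈ T, 1 / b i ≤ p := by rw [hT]; rw [this]; exact hbsum
    linarith [hbinv i₀]
  have hBpos : 0 < ∑ i ∈ T, 1 / b i := by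
    apply Finset.sum_pos
    · intro i _; exact one_div_pos.mpr (hbpos i)
    · have hc : 0 < T.card := by
        rw [hT, Finset.card_erase_of_mem hmem, Finset.card_univ, Fintype.card_fin]
        omega
      exact Finset.card_pos.mp hc
  -- Cauchy-Schwarz (Sedrakyan)
  have hCS : (∑ i ∈ T, 1 / lam i) ^ 2 / (∑ i ∈ T, 1 / b i) ≤ ∑ i ∈ T, (1 / lam i) ^ 2 / (1 / b i) :=
    Finset.sq_sum_div_le_sum_sq_div T _ (fun i _ => one_div_pos.mpr (hbpos i))
  have hrw : ∀ i, (1 / lam i) ^ 2 / (1 / b i) = b i / lam i ^ 2 := by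
    intro i
    have h1 := (hlam i).ne'
    have h2 := (hbpos i).ne'
    field_simp
  rw [hA] at hCS
  have hsum_T_le : ∑ i ∈ T, (1 / lam i) ^ 2 / (1 / b i) ≤ ∑ i, b i / lam i ^ 2 := by
    rw [Finset.sum_congr rfl fun i _ => hrw i]
    apply Finset.sum_le_sum_of_subset_of_nonneg (Finset.erase_subset _ _)
    intro i _ _
    exact div_nonneg (hbpos i).le (sq_nonneg _)
  -- key numeric inequality
  have hpε2 : 0 < p - ε := by nlinarith
  have hθψ : 4 * (ε * ψ₀ / 4) ≤ ε * ψ := by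
    have : ε * ψ₀ ≤ ε * ψ := mul_le_mul_of_nonneg_left hψl hε.le
    linarith
  have harith := key_arith (n:ℝ) (ε * ψ₀ / 4) ε ψ p δ hn2 hψ hpψ (by positivity)
    hθψ hδ0.le hδε hnep hε
  have hmain : ((n:ℝ) + ε * ψ₀ / 4) / ψ ≤ (p - δ) ^ 2 / (p - ε) := by
    rw [div_le_div_iff₀ hψ hpε2]
    linarith [harith]
  calc ((n:ℝ) + ε * ψ₀ / 4) / ψ ≤ (p - δ) ^ 2 / (p - ε) := hmain
  _ ≤ (p - δ) ^ 2 / (∑ i ∈ T, 1 / b i) :=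
      div_le_div_of_nonneg_left (sq_nonneg _) hBpos hB
  _ ≤ ∑ i ∈ T, (1 / lam i) ^ 2 / (1 / b i) := hCS
  _ ≤ ∑ i, b i / lam i ^ 2 := hsum_T_le
end

section
/- Let n ≥ 2 be an integer, δ > 0, and 0 < ψ₀ ≤ ψ₁ be real numbers. Then there exist constants θ > 0 and N ≥ n, depending only on n, δ, ψ₀ and ψ₁, with the following property: for every ψ ∈ [ψ₀, ψ₁], all positive real numbers λ₁, …, λₙ satisfying Σᵢ 1/λᵢ = n/ψ, and all positive real numbers b₁, …, bₙ satisfying, for every index k, Σ_{i≠k} 1/bᵢ ≤ n/ψ − δ, if Σᵢ λᵢ ≥ N then Σᵢ bᵢ/λᵢ² ≥ (n + θ)/ψ. -/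
lemma key_aux (x t d : ℝ) (hd : 0 < d) (hx : 0 < x - d) (ht : 0 < t) (htd : t ≤ d / 4) :
    (x + t) * (x - d) ≤ (x - d / 4) ^ 2 := by
  nlinarith [mul_le_mul_of_nonneg_right htd (by linarith : (0:ℝ) ≤ x),
    mul_nonneg ht.le hd.le, mul_nonneg hd.le (by linarith : (0:ℝ) ≤ x), sq_nonneg d]

/-- Pointwise eigenvalue form of the key lemma (Lemma 2.1) under the weaker
subsolution hypothesis (1.5): with margin `δ > 0`, if for every `k`,
`Σ_{i≠k} 1/bᵢ ≤ n/ψ − δ`, then `Σᵢ λᵢ ≥ N` implies `Σᵢ bᵢ/λᵢ² ≥ (n+θ)/ψ`. -/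
theorem key_lemma_weak_subsolution_form
    (n : ℕ) (hn : 2 ≤ n) (δ ψ₀ ψ₁ : ℝ) (hδ : 0 < δ) (hψ₀ : 0 < ψ₀) (hψ₀₁ : ψ₀ ≤ ψ₁) :
    ∃ θ N : ℝ, 0 < θ ∧ (n : ℝ) ≤ N ∧
      ∀ ψ : ℝ, ψ₀ ≤ ψ → ψ ≤ ψ₁ →
        ∀ lam b : Fin n → ℝ,
          (∀ i, 0 < lam i) →
          (∑ i, 1 / lam i) = n / ψ →
          (∀ i, 0 < b i) →
          (∀ k, ∑ i ∈ Finset.univ.erase k, 1 / b i ≤ n / ψ - δ) →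
          N ≤ ∑ i, lam i →
          (n + θ) / ψ ≤ ∑ i, b i / (lam i) ^ 2 := by
  have hn0 : (0:ℝ) < n := by exact_mod_cast Nat.lt_of_lt_of_le (by norm_num) hn
  set N : ℝ := max (n : ℝ) (4 * n / δ) with hNdef
  refine ⟨δ * ψ₀ / 4, N, by positivity, le_max_left _ _, ?_⟩
  intro ψ hψl hψr lam b hlam hsum hb hbk hN
  have hψ : 0 < ψ := lt_of_lt_of_le hψ₀ hψl
  have hN0 : 0 < N := lt_of_lt_of_le hn0 (le_max_left _ _)
  -- pick k with N/n ≤ lam k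
  obtain ⟨k, -, hk⟩ : ∃ k ∈ Finset.univ, N / n ≤ lam k := by
    apply Finset.exists_le_of_sum_le ⟨(⟨0, by omega⟩ : Fin n), Finset.mem_univ _⟩
    have : ∑ _i : Fin n, N / n = N := by
      rw [Finset.sum_const, Finset.card_univ, Fintype.card_fin, nsmul_eq_mul]
      field_simp
    rw [this]; exact hN
  have hlamk : 0 < lam k := hlam k
  have hkinv : 1 / lam k ≤ δ / 4 := by
    have hNle : N ≤ lam k * n := (div_le_iff₀ hn0).mp hk
    have h1 : 1 / lam k ≤ n / N := by
      rw [div_le_div_iff₀ hlamk hN0]; nlinarith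
    have h2 : (n : ℝ) / N ≤ δ / 4 := by
      have h3 : 4 * n / δ ≤ N := le_max_right _ _
      have h4 : 4 * (n:ℝ) ≤ N * δ := by
        rw [div_le_iff₀ hδ] at h3; linarith
      rw [div_le_div_iff₀ hN0 (by norm_num : (0:ℝ) < 4)]; nlinarith
    linarith
  -- notation
  set a : ℝ := n / ψ with ha
  have ha0 : 0 < a := by positivity
  set S : ℝ := ∑ i ∈ Finset.univ.erase k, 1 / b i with hS
  have hSpos : 0 < S := by
    apply Finset.sum_pos (fun i _ => one_div_pos.mpr (hb i))
    rw [← Finset.card_pos, Finset.card_erase_of_mem (Finset.mem_univ k),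
      Finset.card_univ, Fintype.card_fin]
    omega
  have hSle : S ≤ a - δ := hbk k
  have haδ : 0 < a - δ := lt_of_lt_of_le hSpos hSle
  set T : ℝ := ∑ i ∈ Finset.univ.erase k, 1 / lam i with hT
  have hTeq : T + 1 / lam k = a := by
    rw [hT, Finset.sum_erase_add _ _ (Finset.mem_univ k), hsum]
  have hTge : a - δ / 4 ≤ T := by linarith
  have hTpos : 0 < T := by linarith
  -- Cauchy-Schwarz (Engel form)
  have hCS : T ^ 2 / S ≤ ∑ i ∈ Finset.univ.erase k, b i / lam i ^ 2 := by
    have := Finset.sq_sum_div_le_sum_sq_div (Finset.univ.erase k) (fun i => 1 / lam i)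
      (g := fun i => 1 / b i) (fun i _ => one_div_pos.mpr (hb i))
    calc T ^ 2 / S ≤ ∑ i ∈ Finset.univ.erase k, (1 / lam i) ^ 2 / (1 / b i) := this
      _ = ∑ i ∈ Finset.univ.erase k, b i / lam i ^ 2 := by
          apply Finset.sum_congr rfl
          intro i _
          have h1 := (hlam i).ne'
          have h2 := (hb i).ne'
          field_simp
  have hmain : ∑ i ∈ Finset.univ.erase k, b i / lam i ^ 2 ≤ ∑ i, b i / lam i ^ 2 := by
    rw [← Finset.sum_erase_add _ _ (Finset.mem_univ k)]
    have : 0 ≤ b k / lam k ^ 2 := div_nonneg (hb k).le (sq_nonneg _)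
    linarith
  -- lower bound the Cauchy-Schwarz quotient
  have hq : (a - δ / 4) ^ 2 / (a - δ) ≤ T ^ 2 / S := by
    have h1 : (a - δ / 4) ^ 2 ≤ T ^ 2 := by nlinarith
    have h0 : (0:ℝ) ≤ (a - δ / 4) ^ 2 := sq_nonneg _
    gcongr
  -- final algebra
  have htle : δ * ψ₀ / 4 / ψ ≤ δ / 4 := by
    rw [div_le_div_iff₀ hψ (by norm_num : (0:ℝ) < 4)]
    nlinarith
  have ht0 : 0 < δ * ψ₀ / 4 / ψ := by positivity
  have hta : δ * ψ₀ / 4 / ψ * a ≤ δ / 4 * a := mul_le_mul_of_nonneg_right htle ha0.le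
  have hfin : a + δ * ψ₀ / 4 / ψ ≤ (a - δ / 4) ^ 2 / (a - δ) := by
    rw [le_div_iff₀ haδ]
    exact key_aux a _ δ hδ haδ ht0 htle
  have hgoal : (↑n + δ * ψ₀ / 4) / ψ = a + δ * ψ₀ / 4 / ψ := by
    rw [ha]; ring
  rw [hgoal]
  calc a + δ * ψ₀ / 4 / ψ ≤ (a - δ / 4) ^ 2 / (a - δ) := hfin
    _ ≤ T ^ 2 / S := hq
    _ ≤ _ := hCS.trans hmain
end

section
/- Let n ≥ 2 be an integer, ψ > 0 and ε > 0 real numbers, and let λ₁ ≥ λ₂ ≥ … ≥ λₙ > 0 be real numbers with Σᵢ 1/λᵢ = n/ψ. Let b₁, …, bₙ be real numbers with 0 < bᵢ ≤ 1/ε for all i and Σᵢ 1/bᵢ ≤ n/ψ. Then Σ_{i≥2} bᵢ/λᵢ² ≥ ((n − ψ/λ₁)² / (nψ)) · (1 + εψ/n). -/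
/-- The explicit quantitative estimate (2.13) at the heart of the proof of the key
lemma (Lemma 2.1): with decreasingly ordered positive eigenvalues `λ₁ ≥ ⋯ ≥ λₙ > 0`
satisfying `Σ 1/λᵢ = n/ψ`, and `0 < bᵢ ≤ 1/ε` with `Σ 1/bᵢ ≤ n/ψ`, one has
`Σ_{i≥2} bᵢ/λᵢ² ≥ ((n − ψ/λ₁)²/(nψ)) (1 + εψ/n)`. -/
theorem key_estimate
    (n : ℕ) (hn : 2 ≤ n) (ψ ε : ℝ) (hψ : 0 < ψ) (hε : 0 < ε)
    (lam b : Fin n → ℝ)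
    (hord : ∀ i j : Fin n, i ≤ j → lam j ≤ lam i)
    (hpos : ∀ i, 0 < lam i)
    (heq : ∑ i, 1 / lam i = n / ψ)
    (hb : ∀ i, 0 < b i ∧ b i ≤ 1 / ε)
    (hbsum : ∑ i, 1 / b i ≤ n / ψ) :
    ((n - ψ / lam ⟨0, by omega⟩) ^ 2 / (n * ψ)) * (1 + ε * ψ / n)
      ≤ ∑ i ∈ Finset.univ.erase ⟨0, by omega⟩, b i / (lam i) ^ 2 := by
  have hn0 : (0:ℝ) < n := by positivity
  have hn2 : (2:ℝ) ≤ n := by exact_mod_cast hn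
  set i0 : Fin n := ⟨0, by omega⟩ with hi0
  set s := Finset.univ.erase i0 with hs
  set A := ∑ i ∈ s, b i / lam i ^ 2 with hA
  set B := ∑ i ∈ s, 1 / b i with hB
  set S := ∑ i ∈ s, 1 / lam i with hS
  have hmem : i0 ∈ (Finset.univ : Finset (Fin n)) := Finset.mem_univ _
  have hsplit_lam : 1 / lam i0 + S = n / ψ := by
    rw [← heq, hS, hs]; exact Finset.add_sum_erase Finset.univ (fun i => 1 / lam i) hmem
  have hsplit_b : 1 / b i0 + B ≤ n / ψ := by
    calc 1 / b i0 + B = ∑ i, 1 / b i := by rw [hB, hs]; exact Finset.add_sum_erase Finset.univ (fun i => 1 / b i) hmem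
    _ ≤ n / ψ := hbsum
  -- ε ≤ 1/b i for all i
  have hεb : ∀ i : Fin n, ε ≤ 1 / b i := by
    intro i
    rcases hb i with ⟨h1, h2⟩
    rw [le_div_iff₀ h1]
    calc ε * b i ≤ ε * (1/ε) := by nlinarith
    _ = 1 := by field_simp
  -- B ≤ n/ψ - ε
  have hB_le : B ≤ n / ψ - ε := by linarith [hεb i0]
  -- ε * ψ ≤ 1
  have hc : ε * ψ ≤ 1 := by
    have : (n:ℝ) * ε ≤ ∑ i, 1 / b i := by
      calc (n:ℝ) * ε = ∑ _i : Fin n, ε := by simp [mul_comm]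
      _ ≤ ∑ i, 1 / b i := Finset.sum_le_sum fun i _ => hεb i
    have h2 : (n:ℝ) * ε ≤ n / ψ := this.trans hbsum
    rw [div_eq_mul_inv] at h2
    have h3 : ε ≤ ψ⁻¹ := le_of_mul_le_mul_left (by linarith [mul_comm (n:ℝ) ε]) hn0
    calc ε * ψ ≤ ψ⁻¹ * ψ := by nlinarith
    _ = 1 := inv_mul_cancel₀ hψ.ne'
  -- B > 0
  have hsne : s.Nonempty := by
    refine ⟨⟨1, by omega⟩, Finset.mem_erase.2 ⟨?_, Finset.mem_univ _⟩⟩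
    simp [hi0, Fin.ext_iff]
  have hBpos : 0 < B := Finset.sum_pos (fun i _ => by have := (hb i).1; positivity) hsne
  have hApos : 0 ≤ A := Finset.sum_nonneg fun i _ => by
    have := (hb i).1; have := hpos i; positivity
  have hSpos : 0 ≤ S := Finset.sum_nonneg fun i _ => by
    have := hpos i; positivity
  -- Cauchy-Schwarz: S^2 ≤ A * B
  have hCS : S ^ 2 ≤ A * B := by
    have h := Finset.sq_sum_div_le_sum_sq_div s (fun i => 1 / lam i)
      (g := fun i => 1 / b i) (fun i _ => by have := (hb i).1; positivity)
    have he : ∑ i ∈ s, (1 / lam i) ^ 2 / (1 / b i) = A := by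
      rw [hA]
      refine Finset.sum_congr rfl fun i _ => ?_
      have h1 := (hb i).1.ne'
      have h2 := (hpos i).ne'
      field_simp
    rw [he] at h
    rw [← div_le_iff₀ hBpos] at *
    exact h
  -- rewrite n - ψ/lam i0 = ψ * S
  have hL : (n:ℝ) - ψ / lam i0 = ψ * S := by
    have h1 : 1 / lam i0 = n / ψ - S := by linarith
    rw [div_eq_mul_inv, ← one_div, h1]
    field_simp
    ring
  rw [hL]
  -- final algebra
  have h3 : ψ * S ^ 2 ≤ A * (n - ε * ψ) := by
    have : S ^ 2 ≤ A * (n / ψ - ε) := hCS.trans (mul_le_mul_of_nonneg_left hB_le hApos)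
    have h4 : ψ * S ^ 2 ≤ ψ * (A * (n / ψ - ε)) := by nlinarith
    calc ψ * S ^ 2 ≤ ψ * (A * (n / ψ - ε)) := h4
    _ = A * (n - ε * ψ) := by
      have hψ0 : ψ ≠ 0 := hψ.ne'
      field_simp
  rw [div_mul_eq_mul_div, div_le_iff₀ (by positivity)]
  have key : (ψ * S) ^ 2 * (1 + ε * ψ / n) * n ≤ A * (n * ψ) * n := by
    have e1 : (ψ * S) ^ 2 * (1 + ε * ψ / n) * n = ψ * (ψ * S ^ 2) * (n + ε * ψ) := by
      have hψ0 : ψ ≠ 0 := hψ.ne'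
      have hn0' : (n:ℝ) ≠ 0 := hn0.ne'
      field_simp
    rw [e1]
    have h5 : ψ * (ψ * S ^ 2) * (n + ε * ψ) ≤ ψ * (A * (n - ε * ψ)) * (n + ε * ψ) := by
      have hnn : (0:ℝ) ≤ n + ε * ψ := by nlinarith
      exact mul_le_mul_of_nonneg_right (mul_le_mul_of_nonneg_left h3 hψ.le) hnn
    calc ψ * (ψ * S ^ 2) * (n + ε * ψ) ≤ ψ * (A * (n - ε * ψ)) * (n + ε * ψ) := h5
    _ ≤ A * (n * ψ) * n := by nlinarith [mul_nonneg (mul_nonneg hψ.le hApos) (sq_nonneg (ε * ψ))]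
  exact le_of_mul_le_mul_right key hn0
end

section
/- Let n ≥ 2, let B̄ be the closed unit ball in ℂⁿ, let χ be a continuous map from B̄ to the n×n Hermitian complex matrices, and ψ : B̄ → ℝ continuous and positive. Suppose u, v : B̄ → ℝ are C² functions such that at every z ∈ B̄ both matrices χ(z) + H(u)(z) and χ(z) + H(v)(z) are positive definite and satisfy tr((χ(z) + H(u)(z))⁻¹) = n/ψ(z) = tr((χ(z) + H(v)(z))⁻¹), and u = v on ∂B. Then u = v on all of B̄. -/
open scoped ComplexOrder

/-- The complex Hessian `H(v)(z)` of a real function `v` on `ℂⁿ`: the Hermitian matrix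
with entries `H(v)_{jk} = ∂²v/∂z_j∂z̄_k
  = ¼[D²v(e_j,e_k) + D²v(ie_j,ie_k)] + (i/4)[D²v(e_j,ie_k) − D²v(ie_j,e_k)]`. -/
noncomputable def complexHessian (n : ℕ) (v : EuclideanSpace ℂ (Fin n) → ℝ)
    (z : EuclideanSpace ℂ (Fin n)) : Matrix (Fin n) (Fin n) ℂ :=
  Matrix.of fun j k =>
    let e : Fin n → EuclideanSpace ℂ (Fin n) := fun i => EuclideanSpace.single i (1 : ℂ)
    let D : EuclideanSpace ℂ (Fin n) → EuclideanSpace ℂ (Fin n) → ℝ :=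
      fun a b => iteratedFDeriv ℝ 2 v z ![a, b]
    (((D (e j) (e k) + D (Complex.I • e j) (Complex.I • e k)) / 4 : ℝ) : ℂ)
      + Complex.I * (((D (e j) (Complex.I • e k) - D (Complex.I • e j) (e k)) / 4 : ℝ) : ℂ)

/-- The closed unit ball in `ℂⁿ`. -/
def closedUnitBall (n : ℕ) : Set (EuclideanSpace ℂ (Fin n)) := Metric.closedBall 0 1

/-- The unit sphere (boundary of the unit ball) in `ℂⁿ`. -/
def unitSphere (n : ℕ) : Set (EuclideanSpace ℂ (Fin n)) := Metric.sphere 0 1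


open Topology in

lemma snd_deriv_nonpos_of_localMax {E : Type*} [NormedAddCommGroup E] [NormedSpace ℝ E]
    {f : E → ℝ} {U : Set E} (hU : IsOpen U) {z : E} (hz : z ∈ U)
    (hf : ContDiffOn ℝ 2 f U) (hmax : IsLocalMax f z) (b : E) :
    fderiv ℝ (fderiv ℝ f) z b b ≤ 0 := by
  by_contra hcon
  push_neg at hcon
  set F := fderiv ℝ f with hFdef
  rcases eq_or_ne b 0 with rfl | hb
  · simp at hcon
  set G : E → ℝ := fun x => fderiv ℝ F x b b with hGdef
  have hF : ContDiffOn ℝ 1 F U := hf.fderiv_of_isOpen hU (by norm_num)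
  have hfd : ∀ x ∈ U, DifferentiableAt ℝ f x := fun x hx =>
    (hf.contDiffAt (hU.mem_nhds hx)).differentiableAt two_ne_zero
  have hFd : ∀ x ∈ U, DifferentiableAt ℝ F x := fun x hx =>
    (hF.contDiffAt (hU.mem_nhds hx)).differentiableAt one_ne_zero
  have hfc : ContinuousOn f U := hf.continuousOn
  have hFc : ContinuousOn F U := hF.continuousOn
  have hdFc : ContinuousOn (fderiv ℝ F) U := hF.continuousOn_fderiv_of_isOpen hU le_rfl
  have hGc : ContinuousAt G z := by
    have h1 : ContinuousAt (fderiv ℝ F) z := hdFc.continuousAt (hU.mem_nhds hz)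
    have h2 : Continuous (fun Φ : E →L[ℝ] (E →L[ℝ] ℝ) => Φ b b) :=
      (ContinuousLinearMap.apply ℝ ℝ b).continuous.comp
        (ContinuousLinearMap.apply ℝ (E →L[ℝ] ℝ) b).continuous
    exact h2.continuousAt.comp h1
  have hGpos : ∀ᶠ x in 𝓝 z, 0 < G x := hGc (Ioi_mem_nhds hcon)
  -- a ball where everything holds
  have hmem : (U ∩ {x | 0 < G x} ∩ {x | f x ≤ f z}) ∈ 𝓝 z :=
    Filter.inter_mem (Filter.inter_mem (hU.mem_nhds hz) hGpos) hmax
  rcases Metric.mem_nhds_iff.1 hmem with ⟨δ, hδ, hball⟩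
  set L : ℝ → E := fun t => z + t • b with hLdef
  have hL0 : L 0 = z := by simp [hLdef]
  have hLd : ∀ t : ℝ, HasDerivAt L b t := by
    intro t
    have : HasDerivAt (fun s : ℝ => s • b) ((1:ℝ) • b) t :=
      (hasDerivAt_id t).smul_const b
    simpa [hLdef] using (this.const_add z)
  set r : ℝ := δ / (2 * ‖b‖) with hrdef
  have hbpos : 0 < ‖b‖ := norm_pos_iff.2 hb
  have hr : 0 < r := div_pos hδ (by positivity)
  have hLin : ∀ t ∈ Set.Icc (0:ℝ) r, L t ∈ Metric.ball z δ := by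
    intro t ht
    have : ‖L t - z‖ = |t| * ‖b‖ := by
      simp [hLdef, norm_smul, add_sub_cancel_left, abs_mul]
    rw [Metric.mem_ball, dist_eq_norm, this, abs_of_nonneg ht.1]
    calc t * ‖b‖ ≤ r * ‖b‖ := by nlinarith [ht.2]
      _ = δ / 2 := by rw [hrdef, div_mul_eq_mul_div, mul_div_mul_right _ _ hbpos.ne']
      _ < δ := by linarith
  have hLU : ∀ t ∈ Set.Icc (0:ℝ) r, L t ∈ U := fun t ht => (hball (hLin t ht)).1.1
  set g : ℝ → ℝ := fun t => f (L t) with hgdef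
  set φ : ℝ → ℝ := fun t => F (L t) b with hφdef
  have hg : ∀ t ∈ Set.Icc (0:ℝ) r, HasDerivAt g (φ t) t := by
    intro t ht
    exact ((hfd _ (hLU t ht)).hasFDerivAt).comp_hasDerivAt t (hLd t)
  have hφ : ∀ t ∈ Set.Icc (0:ℝ) r, HasDerivAt φ (G (L t)) t := by
    intro t ht
    have h1 : HasDerivAt (fun s => F (L s)) (fderiv ℝ F (L t) b) t :=
      ((hFd _ (hLU t ht)).hasFDerivAt).comp_hasDerivAt t (hLd t)
    have := h1.clm_apply (hasDerivAt_const t b)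
    simpa using this
  -- φ 0 = 0
  have hgmax : IsLocalMax g 0 := by
    have hLc : ContinuousAt L 0 := (hLd 0).continuousAt
    have : Filter.Tendsto L (nhds 0) (nhds z) := by rw [← hL0] at *; exact hLc
    have h2 : ∀ᶠ t in 𝓝 (0:ℝ), f (L t) ≤ f z := this.eventually hmax
    show ∀ᶠ t in 𝓝 (0:ℝ), g t ≤ g 0
    rw [show g 0 = f z from by simp [hgdef, hL0]]
    exact h2
  have hφ0 : φ 0 = 0 := by
    have hd : deriv g 0 = φ 0 := (hg 0 ⟨le_refl 0, le_of_lt hr⟩).deriv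
    rw [← hd]
    exact hgmax.deriv_eq_zero
  -- φ is strictly monotone on Icc 0 r
  have hφmono : StrictMonoOn φ (Set.Icc 0 r) := by
    apply strictMonoOn_of_deriv_pos (convex_Icc 0 r)
    · exact fun t ht => ((hφ t ht).continuousAt).continuousWithinAt
    · intro t ht
      rw [interior_Icc] at ht
      have ht' : t ∈ Set.Icc (0:ℝ) r := ⟨le_of_lt ht.1, le_of_lt ht.2⟩
      rw [(hφ t ht').deriv]
      exact (hball (hLin t ht')).1.2
  have hφpos : ∀ t ∈ Set.Ioc (0:ℝ) r, 0 < φ t := by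
    intro t ht
    have := hφmono ⟨le_refl 0, le_of_lt hr⟩ ⟨le_of_lt ht.1, ht.2⟩ ht.1
    rwa [hφ0] at this
  -- g is strictly monotone on Icc 0 r
  have hgmono : StrictMonoOn g (Set.Icc 0 r) := by
    apply strictMonoOn_of_deriv_pos (convex_Icc 0 r)
    · exact fun t ht => ((hg t ht).continuousAt).continuousWithinAt
    · intro t ht
      rw [interior_Icc] at ht
      have ht' : t ∈ Set.Icc (0:ℝ) r := ⟨le_of_lt ht.1, le_of_lt ht.2⟩
      rw [(hg t ht').deriv]
      exact hφpos t ⟨ht.1, le_of_lt ht.2⟩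
  have h1 : g 0 < g r := hgmono ⟨le_refl 0, le_of_lt hr⟩ ⟨le_of_lt hr, le_refl r⟩ hr
  have h2 : g r ≤ g 0 := by
    have := (hball (hLin r ⟨le_of_lt hr, le_refl r⟩)).2
    simpa [hgdef, hL0] using this
  linarith

namespace CHAux

variable {n : ℕ}

noncomputable abbrev ee (j : Fin n) : EuclideanSpace ℂ (Fin n) := EuclideanSpace.single j (1 : ℂ)

lemma complexHessian_apply (f : EuclideanSpace ℂ (Fin n) → ℝ) (z : EuclideanSpace ℂ (Fin n))
    (j k : Fin n) :
    complexHessian n f z j k =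
      let T := fderiv ℝ (fderiv ℝ f) z
      (((T (ee j) (ee k) + T (Complex.I • ee j) (Complex.I • ee k)) / 4 : ℝ) : ℂ)
        + Complex.I * (((T (ee j) (Complex.I • ee k) - T (Complex.I • ee j) (ee k)) / 4 : ℝ) : ℂ) := by
  simp only [complexHessian, Matrix.of_apply]
  have h : ∀ a b : EuclideanSpace ℂ (Fin n),
      iteratedFDeriv ℝ 2 f z ![a, b] = fderiv ℝ (fderiv ℝ f) z a b := by
    intro a b
    rw [iteratedFDeriv_two_apply]
    simp
  rw [h, h, h, h]

end CHAux

section Quad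
variable {n : ℕ}
open Finset Matrix

lemma quad_re (f : EuclideanSpace ℂ (Fin n) → ℝ) (z : EuclideanSpace ℂ (Fin n))
    (a : Fin n → ℂ) :
    (dotProduct (star a) ((complexHessian n f z) *ᵥ a)).re
      = (fderiv ℝ (fderiv ℝ f) z ((WithLp.equiv 2 _).symm (star a))
            ((WithLp.equiv 2 _).symm (star a))
        + fderiv ℝ (fderiv ℝ f) z (Complex.I • (WithLp.equiv 2 _).symm (star a))
            (Complex.I • (WithLp.equiv 2 _).symm (star a))) / 4 := by
  classical
  set T := fderiv ℝ (fderiv ℝ f) z with hT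
  set C : EuclideanSpace ℂ (Fin n) := (WithLp.equiv 2 _).symm (star a) with hCdef
  set x : Fin n → ℝ := fun j => (a j).re with hx
  set y : Fin n → ℝ := fun j => -((a j).im) with hy
  have hC : C = ∑ j : Fin n, (x j • CHAux.ee j + y j • (Complex.I • CHAux.ee j)) := by
    ext i
    have hsum : (∑ j : Fin n, (x j • CHAux.ee j + y j • (Complex.I • CHAux.ee j))) i
        = ∑ j : Fin n, (x j • CHAux.ee j + y j • (Complex.I • CHAux.ee j)) i :=
      by rw [WithLp.ofLp_sum]; exact Finset.sum_apply i Finset.univ _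
    rw [hsum, Finset.sum_eq_single i]
    · simp [CHAux.ee, EuclideanSpace.single_apply, hCdef, hx, hy, Complex.ext_iff,
        Complex.real_smul]
    · intro b _ hb
      simp [CHAux.ee, EuclideanSpace.single_apply, Ne.symm hb]
    · simp
  have hIC : Complex.I • C = ∑ j : Fin n, (x j • (Complex.I • CHAux.ee j) + (-(y j)) • CHAux.ee j) := by
    rw [hC, Finset.smul_sum]
    refine Finset.sum_congr rfl fun j _ => ?_
    rw [smul_add, smul_comm (Complex.I) (x j), smul_comm (Complex.I) (y j), smul_smul,
      Complex.I_mul_I, neg_one_smul, smul_neg, neg_smul, neg_smul]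
    simp [hy]
  have hexp : ∀ (p q : Fin n → EuclideanSpace ℂ (Fin n)),
      T (∑ j, p j) (∑ k, q k) = ∑ j, ∑ k, T (p j) (q k) := by
    intro p q
    have h2 : T (∑ j, p j) = ∑ j, T (p j) := map_sum T p Finset.univ
    rw [h2, ContinuousLinearMap.sum_apply]
    exact Finset.sum_congr rfl fun j _ => map_sum _ _ _
  have hLHS : dotProduct (star a) ((complexHessian n f z) *ᵥ a)
      = ∑ j, ∑ k, star (a j) * (complexHessian n f z j k * a k) := by
    simp [dotProduct, Matrix.mulVec, Finset.mul_sum]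
  rw [hLHS]
  simp only [Complex.re_sum]
  rw [hIC, hC, hexp, hexp, ← Finset.sum_add_distrib, Finset.sum_div]
  refine Finset.sum_congr rfl fun j _ => ?_
  rw [← Finset.sum_add_distrib, Finset.sum_div]
  refine Finset.sum_congr rfl fun k _ => ?_
  rw [CHAux.complexHessian_apply]
  simp only [map_add, _root_.map_smul, ContinuousLinearMap.add_apply,
    ContinuousLinearMap.smul_apply, smul_eq_mul, ← hT]
  simp only [Complex.mul_re, Complex.mul_im, Complex.add_re, Complex.add_im,
    Complex.ofReal_re, Complex.ofReal_im, Complex.I_re, Complex.I_im,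
    Complex.star_def, Complex.conj_re, Complex.conj_im]
  ring
end Quad

section Herm
variable {n : ℕ}
open Matrix

lemma complexHessian_isHermitian (f : EuclideanSpace ℂ (Fin n) → ℝ) (z : EuclideanSpace ℂ (Fin n))
    (hsym : ∀ p q, fderiv ℝ (fderiv ℝ f) z p q = fderiv ℝ (fderiv ℝ f) z q p) :
    (complexHessian n f z).IsHermitian := by
  rw [Matrix.IsHermitian]
  ext j k
  rw [Matrix.conjTranspose_apply, CHAux.complexHessian_apply, CHAux.complexHessian_apply]
  simp only [Complex.ext_iff, Complex.add_re, Complex.add_im, Complex.mul_re, Complex.mul_im,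
    Complex.ofReal_re, Complex.ofReal_im, Complex.I_re, Complex.I_im, Complex.star_def,
    Complex.conj_re, Complex.conj_im]
  constructor
  · rw [hsym (CHAux.ee k) (CHAux.ee j), hsym (Complex.I • CHAux.ee k) (Complex.I • CHAux.ee j)]
    ring
  · rw [hsym (CHAux.ee k) (Complex.I • CHAux.ee j), hsym (Complex.I • CHAux.ee k) (CHAux.ee j)]
    ring

lemma im_zero_of_hermitian {M : Matrix (Fin n) (Fin n) ℂ} (hM : M.IsHermitian) (a : Fin n → ℂ) :
    (dotProduct (star a) (M *ᵥ a)).im = 0 := by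
  have h1 : dotProduct (star a) (M *ᵥ a)
      = star (dotProduct (star (M *ᵥ a)) a) := Matrix.star_dotProduct a (M *ᵥ a)
  have h2 : star (dotProduct (star a) (M *ᵥ a))
      = dotProduct (star (M *ᵥ a)) a := by rw [h1, star_star]
  have h3 : dotProduct (star (M *ᵥ a)) a
      = dotProduct (star a) (M *ᵥ a) := by
    rw [Matrix.star_mulVec, ← Matrix.dotProduct_mulVec, hM.eq]
  have h4 : star (dotProduct (star a) (M *ᵥ a)) = dotProduct (star a) (M *ᵥ a) :=
    h2.trans h3
  have := Complex.conj_eq_iff_im.1 h4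
  exact this
end Herm

section Lin
variable {n : ℕ}
open Matrix Topology

local notation "E'" => EuclideanSpace ℂ (Fin n)

lemma fderiv_normsq (x : E') :
    fderiv ℝ (fun y : E' => ‖y‖ ^ 2) x = (2 : ℕ) • innerSL ℝ x :=
  (hasStrictFDerivAt_norm_sq x).hasFDerivAt.fderiv

lemma fderiv2_normsq (z : E') :
    fderiv ℝ (fderiv ℝ (fun y : E' => ‖y‖ ^ 2)) z = (2 : ℕ) • (innerSL ℝ) := by
  have h1 : fderiv ℝ (fun y : E' => ‖y‖ ^ 2) = fun x => ((2 : ℕ) • (innerSL ℝ (E := E'))) x := by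
    funext x
    rw [fderiv_normsq x, ContinuousLinearMap.smul_apply]
  rw [h1]
  exact ContinuousLinearMap.fderiv _

lemma fderiv2_w {U : Set E'} (hU : IsOpen U) {z : E'} (hz : z ∈ U)
    {u v : E' → ℝ} (hu : ContDiffOn ℝ 2 u U) (hv : ContDiffOn ℝ 2 v U) (ε : ℝ) :
    fderiv ℝ (fderiv ℝ (fun x => u x - v x + ε * ‖x‖ ^ 2)) z
      = fderiv ℝ (fderiv ℝ u) z - fderiv ℝ (fderiv ℝ v) z + ε • ((2 : ℕ) • @id (E' →L[ℝ] E' →L[ℝ] ℝ) (innerSL ℝ)) := by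
  have hq : ContDiff ℝ 2 (fun y : E' => ‖y‖ ^ 2) := contDiff_norm_sq ℝ
  have hqd : Differentiable ℝ (fun y : E' => ‖y‖ ^ 2) := hq.differentiable two_ne_zero
  have hud : ∀ x ∈ U, DifferentiableAt ℝ u x := fun x hx =>
    (hu.contDiffAt (hU.mem_nhds hx)).differentiableAt two_ne_zero
  have hvd : ∀ x ∈ U, DifferentiableAt ℝ v x := fun x hx =>
    (hv.contDiffAt (hU.mem_nhds hx)).differentiableAt two_ne_zero
  have hfe : ∀ᶠ x in 𝓝 z, fderiv ℝ (fun x => u x - v x + ε * ‖x‖ ^ 2) x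
      = fderiv ℝ u x - fderiv ℝ v x + ε • fderiv ℝ (fun y : E' => ‖y‖ ^ 2) x := by
    filter_upwards [hU.mem_nhds hz] with x hx
    rw [fderiv_fun_add ((hud x hx).fun_sub (hvd x hx)) ((hqd x).const_mul ε),
      fderiv_fun_sub (hud x hx) (hvd x hx), fderiv_const_mul (hqd x) ε]
  have hFu : DifferentiableAt ℝ (fderiv ℝ u) z :=
    ((hu.fderiv_of_isOpen hU le_rfl).contDiffAt (hU.mem_nhds hz)).differentiableAt one_ne_zero
  have hFv : DifferentiableAt ℝ (fderiv ℝ v) z :=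
    ((hv.fderiv_of_isOpen hU le_rfl).contDiffAt (hU.mem_nhds hz)).differentiableAt one_ne_zero
  have hq1 : fderiv ℝ (fun y : E' => ‖y‖ ^ 2)
      = fun x => ((2 : ℕ) • (innerSL ℝ (E := E'))) x := by
    funext x
    rw [fderiv_normsq x, ContinuousLinearMap.smul_apply]
  have hFq : DifferentiableAt ℝ (fderiv ℝ (fun y : E' => ‖y‖ ^ 2)) z := by
    rw [hq1]
    exact (ContinuousLinearMap.differentiable _).differentiableAt
  rw [Filter.EventuallyEq.fderiv_eq hfe,
    fderiv_fun_add (hFu.fun_sub hFv) (hFq.fun_const_smul ε),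
    fderiv_fun_sub hFu hFv, fderiv_fun_const_smul hFq ε, fderiv2_normsq]
  rfl

lemma inner_ee_ee (j k : Fin n) :
    inner ℝ (CHAux.ee j) (CHAux.ee k) = if j = k then 1 else 0 := by
  simp only [PiLp.inner_apply, CHAux.ee, EuclideanSpace.single_apply, Complex.inner]
  rw [Finset.sum_eq_single j] <;> simp +contextual [eq_comm]
  split_ifs <;> simp

lemma inner_Iee_Iee (j k : Fin n) :
    inner ℝ (Complex.I • CHAux.ee j) (Complex.I • CHAux.ee k) = if j = k then 1 else 0 := by
  simp only [PiLp.inner_apply, CHAux.ee, PiLp.smul_apply, EuclideanSpace.single_apply,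
    Complex.inner, smul_eq_mul]
  rw [Finset.sum_eq_single j] <;> simp +contextual [eq_comm, Complex.ext_iff]
  split_ifs <;> simp

lemma inner_ee_Iee (j k : Fin n) :
    inner ℝ (CHAux.ee j) (Complex.I • CHAux.ee k) = 0 := by
  simp only [PiLp.inner_apply, CHAux.ee, PiLp.smul_apply, EuclideanSpace.single_apply,
    Complex.inner, smul_eq_mul]
  apply Finset.sum_eq_zero
  intro i _
  split_ifs <;> simp [Complex.ext_iff]

lemma inner_Iee_ee (j k : Fin n) :
    inner ℝ (Complex.I • CHAux.ee j) (CHAux.ee k) = 0 := by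
  simp only [PiLp.inner_apply, CHAux.ee, PiLp.smul_apply, EuclideanSpace.single_apply,
    Complex.inner, smul_eq_mul]
  apply Finset.sum_eq_zero
  intro i _
  split_ifs <;> simp [Complex.ext_iff]

lemma hessian_w {U : Set (EuclideanSpace ℂ (Fin n))} (hU : IsOpen U)
    {z : EuclideanSpace ℂ (Fin n)} (hz : z ∈ U)
    {u v : EuclideanSpace ℂ (Fin n) → ℝ} (hu : ContDiffOn ℝ 2 u U) (hv : ContDiffOn ℝ 2 v U)
    (ε : ℝ) :
    complexHessian n (fun x => u x - v x + ε * ‖x‖ ^ 2) z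
      = complexHessian n u z - complexHessian n v z + (ε : ℂ) • 1 := by
  have hT := fderiv2_w hU hz hu hv ε
  have hpt : ∀ p q : EuclideanSpace ℂ (Fin n),
      fderiv ℝ (fderiv ℝ (fun x => u x - v x + ε * ‖x‖ ^ 2)) z p q
        = fderiv ℝ (fderiv ℝ u) z p q - fderiv ℝ (fderiv ℝ v) z p q
          + ε * (2 * inner ℝ p q) := by
    intro p q
    rw [hT]
    simp only [ContinuousLinearMap.add_apply, ContinuousLinearMap.sub_apply,
      ContinuousLinearMap.smul_apply, ContinuousLinearMap.coe_smul', Pi.smul_apply,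
      innerSL_apply_apply, smul_eq_mul, nsmul_eq_mul, id_eq]
    push_cast
    ring_nf; rfl
  ext j k
  rw [Matrix.add_apply, Matrix.sub_apply, Matrix.smul_apply, Matrix.one_apply,
    CHAux.complexHessian_apply, CHAux.complexHessian_apply, CHAux.complexHessian_apply]
  simp only [hpt, inner_ee_ee, inner_Iee_Iee, inner_ee_Iee, inner_Iee_ee]
  split_ifs with h
  · simp only [Complex.ext_iff, Complex.add_re, Complex.add_im, Complex.sub_re, Complex.sub_im,
      Complex.mul_re, Complex.mul_im, Complex.ofReal_re, Complex.ofReal_im, Complex.I_re,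
      Complex.I_im, Complex.smul_re, Complex.smul_im, smul_eq_mul, Complex.one_re, Complex.one_im]
    constructor <;> ring
  · simp only [Complex.ext_iff, Complex.add_re, Complex.add_im, Complex.sub_re, Complex.sub_im,
      Complex.mul_re, Complex.mul_im, Complex.ofReal_re, Complex.ofReal_im, Complex.I_re,
      Complex.I_im, Complex.smul_re, Complex.smul_im, smul_eq_mul, Complex.zero_re,
      Complex.zero_im]
    constructor <;> ring
end Lin


namespace DirichletAux
open Matrix Topology Finset
open scoped ComplexOrder

variable {n : ℕ}

/-! ### Matrix lemmas -/

lemma nonneg_iff' {t : ℂ} : 0 ≤ t ↔ 0 ≤ t.re ∧ t.im = 0 := by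
  rw [Complex.le_def]; simp [eq_comm]

lemma diag_pos {M : Matrix (Fin n) (Fin n) ℂ} (h : M.PosDef) (i : Fin n) :
    0 < M i i := by
  have := h.dotProduct_mulVec_pos (x := Pi.single i 1) (by simp [Pi.single_eq_same, Function.ne_iff])
  simpa [dotProduct, Matrix.mulVec, Pi.single_apply, Finset.sum_ite_eq,
    Finset.mul_sum] using this

lemma trace_pos' [NeZero n] {M : Matrix (Fin n) (Fin n) ℂ} (h : M.PosDef) : 0 < M.trace := by
  exact Finset.sum_pos (fun i _ => diag_pos h i) Finset.univ_nonempty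

lemma dot_single (M : Matrix (Fin n) (Fin n) ℂ) (i : Fin n) :
    dotProduct (star (Pi.single i (1:ℂ))) (M *ᵥ Pi.single i 1) = M i i := by
  simp [dotProduct, Matrix.mulVec, Pi.single_apply, Finset.mul_sum]

lemma trace_le_of_dot {M N : Matrix (Fin n) (Fin n) ℂ}
    (h : ∀ x, dotProduct (star x) (M *ᵥ x) ≤ dotProduct (star x) (N *ᵥ x)) :
    M.trace ≤ N.trace := by
  refine Finset.sum_le_sum fun i _ => ?_
  have := h (Pi.single i 1)
  rwa [dot_single, dot_single] at this

open scoped MatrixOrder in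
lemma dot_inv_le_dot_inv {S B : Matrix (Fin n) (Fin n) ℂ} (hS : S.PosDef) (hB : B.PosDef)
    (hle : (B - S).PosSemidef) (x : Fin n → ℂ) :
    dotProduct (star x) (B⁻¹ *ᵥ x) ≤ dotProduct (star x) (S⁻¹ *ᵥ x) := by
  classical
  set R := CFC.sqrt S with hRdef
  have hR : R.PosSemidef := (CFC.sqrt_nonneg S).posSemidef
  have hRR : R * R = S := CFC.sqrt_mul_sqrt_self S hS.posSemidef.nonneg
  have hdetS : IsUnit S.det := hS.isUnit.map (Matrix.detMonoidHom)
  have hdetB : IsUnit B.det := hB.isUnit.map (Matrix.detMonoidHom)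
  have hdetR : IsUnit R.det := by
    have : R.det * R.det = S.det := by rw [← Matrix.det_mul, hRR]
    exact isUnit_of_mul_isUnit_left (this ▸ hdetS)
  set y := B⁻¹ *ᵥ x with hy
  have hBy : B *ᵥ y = x := by rw [hy, Matrix.mulVec_mulVec, Matrix.mul_nonsing_inv B hdetB,
    Matrix.one_mulVec]
  set t := dotProduct (star x) (B⁻¹ *ᵥ x) with ht
  set s := dotProduct (star x) (S⁻¹ *ᵥ x) with hs
  have htnn : 0 ≤ t := (hB.inv.posSemidef).dotProduct_mulVec_nonneg x
  have hsnn : 0 ≤ s := (hS.inv.posSemidef).dotProduct_mulVec_nonneg x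
  have hyx : dotProduct (star y) x = t := by
    have h1 : star t = t := by
      rw [nonneg_iff'] at htnn
      exact Complex.conj_eq_iff_im.2 htnn.2
    calc dotProduct (star y) x = star (dotProduct (star x) y) := by
          rw [Matrix.star_dotProduct]
      _ = t := by rw [← ht]; exact h1
  set p : EuclideanSpace ℂ (Fin n) := (WithLp.equiv 2 _).symm (R *ᵥ y)
  set q : EuclideanSpace ℂ (Fin n) := (WithLp.equiv 2 _).symm (R⁻¹ *ᵥ x)
  have hRH : Rᴴ = R := hR.1
  have key : ∀ (v w : Fin n → ℂ) (M N : Matrix (Fin n) (Fin n) ℂ),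
      dotProduct (star (M *ᵥ v)) (N *ᵥ w)
        = dotProduct (star v) ((Mᴴ * N) *ᵥ w) := by
    intro v w M N
    simp only [Matrix.star_mulVec, Matrix.dotProduct_mulVec, Matrix.vecMul_vecMul]
  have hpq : inner ℂ p q = t := by
    rw [show inner ℂ p q = dotProduct (star (R *ᵥ y)) (R⁻¹ *ᵥ x) from dotProduct_comm (R⁻¹ *ᵥ x) (star (R *ᵥ y)), key, hRH, Matrix.mul_nonsing_inv R hdetR,
      Matrix.one_mulVec, hyx]
  have hpp : inner ℂ p p = dotProduct (star y) (S *ᵥ y) := by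
    rw [show inner ℂ p p = dotProduct (star (R *ᵥ y)) (R *ᵥ y) from dotProduct_comm (R *ᵥ y) (star (R *ᵥ y)), key, hRH, hRR]
  have hqq : inner ℂ q q = s := by
    rw [show inner ℂ q q = dotProduct (star (R⁻¹ *ᵥ x)) (R⁻¹ *ᵥ x) from dotProduct_comm (R⁻¹ *ᵥ x) (star (R⁻¹ *ᵥ x)), key, Matrix.conjTranspose_nonsing_inv, hRH,
      ← Matrix.mul_inv_rev, hRR]
  have hppt : inner ℂ p p ≤ t := by
    have h0 : 0 ≤ dotProduct (star y) ((B - S) *ᵥ y) := hle.dotProduct_mulVec_nonneg y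
    have : dotProduct (star y) ((B - S) *ᵥ y)
        = t - dotProduct (star y) (S *ᵥ y) := by
      rw [Matrix.sub_mulVec, dotProduct_sub, hBy, hyx]
    rw [hpp]
    exact sub_nonneg.1 (this ▸ h0)
  have hCS : ‖inner ℂ p q‖ ≤ ‖p‖ * ‖q‖ := norm_inner_le_norm p q
  have hnp : ‖p‖ ^ 2 = (inner ℂ p p).re := by
    rw [← inner_self_eq_norm_sq (𝕜 := ℂ) p]; simp
  have hnq : ‖q‖ ^ 2 = (inner ℂ q q).re := by
    rw [← inner_self_eq_norm_sq (𝕜 := ℂ) q]; simp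
  rw [nonneg_iff'] at htnn hsnn
  have htabs : ‖inner ℂ p q‖ = t.re := by
    rw [hpq]
    rw [Complex.norm_def, Complex.normSq_apply, htnn.2]
    simp [Real.sqrt_mul_self htnn.1]
  have h1 : t.re ≤ ‖p‖ * ‖q‖ := htabs ▸ hCS
  have h2 : ‖p‖ ^ 2 ≤ t.re := by
    rw [hnp]; exact (Complex.le_def.1 hppt).1
  have h3 : ‖q‖ ^ 2 = s.re := by rw [hnq, hqq]
  have hfin : t.re ≤ s.re := by
    rcases eq_or_lt_of_le htnn.1 with h0 | h0
    · linarith [hsnn.1]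
    · nlinarith [norm_nonneg p, norm_nonneg q]
  rw [Complex.le_def]
  exact ⟨hfin, by rw [htnn.2, hsnn.2]⟩

lemma smul_one_posDef {ε : ℝ} (hε : 0 < ε) : ((ε : ℂ) • (1 : Matrix (Fin n) (Fin n) ℂ)).PosDef := by
  have : (ε : ℂ) • (1 : Matrix (Fin n) (Fin n) ℂ) = Matrix.diagonal (fun _ => (ε : ℂ)) := by
    ext i j
    by_cases h : i = j <;> simp [Matrix.diagonal, h, Matrix.one_apply]
  rw [this]
  exact Matrix.PosDef.diagonal (fun i => by exact_mod_cast hε)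

lemma smul_posDef {ε : ℝ} (hε : 0 < ε) {M : Matrix (Fin n) (Fin n) ℂ} (hM : M.PosDef) :
    ((ε : ℂ) • M).PosDef := by
  refine Matrix.PosDef.of_dotProduct_mulVec_pos ?_ ?_
  · rw [Matrix.IsHermitian, Matrix.conjTranspose_smul, hM.1]
    congr 1
    simp [Complex.conj_ofReal]
  · intro x hx
    rw [Matrix.smul_mulVec, dotProduct_smul, smul_eq_mul]
    exact mul_pos (by exact_mod_cast hε) (hM.dotProduct_mulVec_pos hx)

lemma trace_inv_lt [NeZero n] {A : Matrix (Fin n) (Fin n) ℂ} (hA : A.PosDef) {ε : ℝ}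
    (hε : 0 < ε) : ((A + (ε : ℂ) • 1)⁻¹).trace < (A⁻¹).trace := by
  classical
  set S := A + (ε : ℂ) • 1 with hSdef
  have hSpd : S.PosDef := hA.add_posSemidef (smul_one_posDef hε).posSemidef
  have hdetA : IsUnit A.det := hA.isUnit.map (Matrix.detMonoidHom)
  have hdetS : IsUnit S.det := hSpd.isUnit.map (Matrix.detMonoidHom)
  have hid : A⁻¹ - S⁻¹ = (ε : ℂ) • (S * A)⁻¹ := by
    have h1 : A⁻¹ * (S - A) * S⁻¹ = A⁻¹ - S⁻¹ := by
      rw [Matrix.mul_sub, Matrix.sub_mul, Matrix.nonsing_inv_mul A hdetA, Matrix.one_mul,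
        Matrix.mul_assoc, Matrix.mul_nonsing_inv S hdetS, Matrix.mul_one]
    have h2 : S - A = (ε : ℂ) • 1 := by rw [hSdef]; exact add_sub_cancel_left A _
    rw [← h1, h2, Matrix.mul_inv_rev]
    rw [Matrix.mul_smul, Matrix.mul_one, Matrix.smul_mul]
  have hSA : (S * A).PosDef := by
    have : S * A = A * A + (ε : ℂ) • A := by
      rw [hSdef, Matrix.add_mul, Matrix.smul_mul, Matrix.one_mul]
    rw [this]
    have hAA : (A * A).PosSemidef := by
      have := Matrix.posSemidef_conjTranspose_mul_self A
      rwa [hA.1] at this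
    exact Matrix.PosDef.posSemidef_add hAA (smul_posDef hε hA)
  have htr : (A⁻¹).trace - (S⁻¹).trace = (ε : ℂ) * ((S * A)⁻¹).trace := by
    rw [← Matrix.trace_sub, hid, Matrix.trace_smul, smul_eq_mul]
  have hpos : 0 < ((S * A)⁻¹).trace := trace_pos' hSA.inv
  have : 0 < (A⁻¹).trace - (S⁻¹).trace := by
    rw [htr]
    exact mul_pos (by exact_mod_cast hε) hpos
  exact sub_pos.1 this

lemma matrix_contra [NeZero n] {A B : Matrix (Fin n) (Fin n) ℂ} {ε : ℝ}
    (hA : A.PosDef) (hB : B.PosDef) (hε : 0 < ε)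
    (hle : (B - (A + (ε : ℂ) • 1)).PosSemidef)
    (htr : (A⁻¹).trace = (B⁻¹).trace) : False := by
  have hS : (A + (ε : ℂ) • 1).PosDef := hA.add_posSemidef (smul_one_posDef hε).posSemidef
  have h1 : (B⁻¹).trace ≤ ((A + (ε : ℂ) • 1)⁻¹).trace :=
    trace_le_of_dot (dot_inv_le_dot_inv hS hB hle)
  have h2 : ((A + (ε : ℂ) • 1)⁻¹).trace < (A⁻¹).trace := trace_inv_lt hA hε
  rw [htr] at h2
  exact absurd (lt_of_le_of_lt h1 h2) (lt_irrefl _)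

end DirichletAux


section MainProof
open Matrix Topology
open scoped ComplexOrder

lemma dirichlet_one_side
    (n : ℕ) (hn : 2 ≤ n)
    (χ : EuclideanSpace ℂ (Fin n) → Matrix (Fin n) (Fin n) ℂ)
    (ψ : EuclideanSpace ℂ (Fin n) → ℝ)
    (u v : EuclideanSpace ℂ (Fin n) → ℝ)
    (U : Set (EuclideanSpace ℂ (Fin n))) (hU : IsOpen U) (hBU : closedUnitBall n ⊆ U)
    (hu : ContDiffOn ℝ 2 u U) (hv : ContDiffOn ℝ 2 v U)
    (hequ : ∀ z ∈ closedUnitBall n, (χ z + complexHessian n u z).PosDef ∧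
      ((χ z + complexHessian n u z)⁻¹).trace = (n : ℂ) / (ψ z : ℂ))
    (heqv : ∀ z ∈ closedUnitBall n, (χ z + complexHessian n v z).PosDef ∧
      ((χ z + complexHessian n v z)⁻¹).trace = (n : ℂ) / (ψ z : ℂ))
    (hbd : Set.EqOn u v (unitSphere n)) :
    ∀ z ∈ closedUnitBall n, u z ≤ v z := by
  haveI : NeZero n := ⟨by omega⟩
  by_contra hcon
  push_neg at hcon
  obtain ⟨z₀, hz₀B, hz₀⟩ := hcon
  set ε : ℝ := (u z₀ - v z₀) / 2 with hεdef
  have hε : 0 < ε := by simp only [hεdef]; linarith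
  set w : EuclideanSpace ℂ (Fin n) → ℝ := fun x => u x - v x + ε * ‖x‖ ^ 2 with hwdef
  -- continuity and compactness
  have hcw : ContinuousOn w (closedUnitBall n) := by
    apply ContinuousOn.add
    · exact ((hu.continuousOn).mono hBU).sub ((hv.continuousOn).mono hBU)
    · exact (continuous_const.mul ((continuous_norm).pow 2)).continuousOn
  have hcompact : IsCompact (closedUnitBall n) := isCompact_closedBall 0 1
  obtain ⟨z₁, hz₁B, hmax⟩ := hcompact.exists_isMaxOn ⟨z₀, hz₀B⟩ hcw
  have hwz₀ : ε < w z₀ := by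
    have h1 : 0 ≤ ‖z₀‖ ^ 2 := sq_nonneg _
    have h2 : u z₀ - v z₀ = 2 * ε := by rw [hεdef]; ring
    simp only [hwdef]
    nlinarith
  have hwz₁ : ε < w z₁ := lt_of_lt_of_le hwz₀ (hmax hz₀B)
  -- z₁ is interior
  have hz₁lt : ‖z₁‖ < 1 := by
    rcases lt_or_eq_of_le (by simpa [closedUnitBall, Metric.mem_closedBall,
      dist_zero_right] using hz₁B : ‖z₁‖ ≤ 1) with h | h
    · exact h
    · exfalso
      have hsp : z₁ ∈ unitSphere n := by
        simp [unitSphere, Metric.mem_sphere, dist_zero_right, h]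
      have : w z₁ = ε := by
        simp only [hwdef]
        rw [hbd hsp, h]
        ring
      rw [this] at hwz₁
      exact lt_irrefl _ hwz₁
  have hz₁ball : z₁ ∈ Metric.ball (0 : EuclideanSpace ℂ (Fin n)) 1 := by
    simpa [Metric.mem_ball, dist_zero_right] using hz₁lt
  have hz₁U : z₁ ∈ U := hBU hz₁B
  -- local max
  have hloc : IsLocalMax w z₁ := by
    apply hmax.isLocalMax
    exact Filter.mem_of_superset (Metric.isOpen_ball.mem_nhds hz₁ball)
      Metric.ball_subset_closedBall
  -- w is C² on U
  have hqcd : ContDiffOn ℝ 2 (fun x : EuclideanSpace ℂ (Fin n) => ε * ‖x‖ ^ 2) U :=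
    (contDiff_const.mul (contDiff_norm_sq ℝ)).contDiffOn
  have hw2 : ContDiffOn ℝ 2 w U := ((hu.sub hv).add hqcd)
  -- second derivative test
  have hsd : ∀ b : EuclideanSpace ℂ (Fin n), fderiv ℝ (fderiv ℝ w) z₁ b b ≤ 0 :=
    fun b => snd_deriv_nonpos_of_localMax hU hz₁U hw2 hloc b
  -- symmetry of the second derivative
  have hsym : ∀ p q, fderiv ℝ (fderiv ℝ w) z₁ p q = fderiv ℝ (fderiv ℝ w) z₁ q p := by
    have := (hw2.contDiffAt (hU.mem_nhds hz₁U)).isSymmSndFDerivAt (by simp [minSmoothness_of_isRCLikeNormedField])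
    exact fun p q => this p q
  -- -H(w)(z₁) is positive semidefinite
  set M := complexHessian n w z₁ with hMdef
  have hMherm : M.IsHermitian := complexHessian_isHermitian w z₁ hsym
  have hpsd : (-M).PosSemidef := by
    refine Matrix.PosSemidef.of_dotProduct_mulVec_nonneg hMherm.neg fun a => ?_
    rw [DirichletAux.nonneg_iff']
    constructor
    · have h1 : dotProduct (star a) ((-M) *ᵥ a)
          = -(dotProduct (star a) (M *ᵥ a)) := by
        rw [Matrix.neg_mulVec, dotProduct_neg]
      rw [h1, Complex.neg_re, hMdef, quad_re w z₁ a]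
      have t1 := hsd ((WithLp.equiv 2 _).symm (star a))
      have t2 := hsd (Complex.I • (WithLp.equiv 2 _).symm (star a))
      linarith
    · have := im_zero_of_hermitian hMherm.neg a
      exact this
  -- the matrices at z₁
  set A := χ z₁ + complexHessian n u z₁ with hAdef
  set B := χ z₁ + complexHessian n v z₁ with hBdef
  have hA : A.PosDef := (hequ z₁ hz₁B).1
  have hB : B.PosDef := (heqv z₁ hz₁B).1
  have htrAB : (A⁻¹).trace = (B⁻¹).trace := by
    rw [(hequ z₁ hz₁B).2, (heqv z₁ hz₁B).2]
  have hBS : B - (A + (ε : ℂ) • 1) = -M := by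
    rw [hMdef, hwdef, hessian_w hU hz₁U hu hv ε, hAdef, hBdef]
    abel
  exact DirichletAux.matrix_contra hA hB hε (hBS ▸ hpsd) htrAB

end MainProof

/-- Uniqueness for the Dirichlet problem (Theorem 1.2) on the closed unit ball of
`ℂⁿ` with the flat Kähler metric: two `C²` solutions of `χ + H(u) > 0`,
`tr ((χ + H(u))⁻¹) = n/ψ` on `B̄` with the same boundary values coincide on `B̄`. -/
theorem dirichlet_uniqueness
    (n : ℕ) (hn : 2 ≤ n)
    (χ : EuclideanSpace ℂ (Fin n) → Matrix (Fin n) (Fin n) ℂ)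
    (ψ : EuclideanSpace ℂ (Fin n) → ℝ)
    -- χ is a continuous map from B̄ into Hermitian matrices, ψ continuous positive
    (hχ : ContinuousOn χ (closedUnitBall n))
    (hherm : ∀ z ∈ closedUnitBall n, (χ z).IsHermitian)
    (hψ : ContinuousOn ψ (closedUnitBall n))
    (hψpos : ∀ z ∈ closedUnitBall n, 0 < ψ z)
    -- u and v are C² (on a neighborhood of B̄)
    (u v : EuclideanSpace ℂ (Fin n) → ℝ)
    (U : Set (EuclideanSpace ℂ (Fin n))) (hU : IsOpen U) (hBU : closedUnitBall n ⊆ U)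
    (hu : ContDiffOn ℝ 2 u U) (hv : ContDiffOn ℝ 2 v U)
    -- both solve the equation on B̄
    (hequ : ∀ z ∈ closedUnitBall n, (χ z + complexHessian n u z).PosDef ∧
      ((χ z + complexHessian n u z)⁻¹).trace = (n : ℂ) / (ψ z : ℂ))
    (heqv : ∀ z ∈ closedUnitBall n, (χ z + complexHessian n v z).PosDef ∧
      ((χ z + complexHessian n v z)⁻¹).trace = (n : ℂ) / (ψ z : ℂ))
    -- and agree on the boundary
    (hbd : Set.EqOn u v (unitSphere n)) :
    Set.EqOn u v (closedUnitBall n) := by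
  intro z hz
  exact le_antisymm
    (dirichlet_one_side n hn χ ψ u v U hU hBU hu hv hequ heqv hbd z hz)
    (dirichlet_one_side n hn χ ψ v u U hU hBU hv hu heqv hequ hbd.symm z hz)
end
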